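/- arXiv:2409.05507 — 8 statements merged into one kernel-verified Lean document; each statement's English description precedes it below -/
import Mathlib

section
/- Let V be a finite-dimensional complex inner product space with Hermitian inner product h, linear in the first argument and conjugate-linear in the second. For a self-adjoint ℂ-linear endomorphism B of V let g_B denote the real bilinear form on V given by g_B(v,w) = Re h(Bv,w), and for a real subspace X of V let X^{⊥,g_B} = {v ∈ V : g_B(v,x) = 0 for all x ∈ X}. Let A and C be self-adjoint ℂ-linear endomorphisms of V with C invertible, and let W be any real subspace of V. Then ((W^{⊥,g_A})^{⊥,g_C})^{⊥,g_A} = W^{⊥,g_D}, where D := A ∘ C⁻¹ ∘ A (a self-adjoint endomorphism of V). -/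
variable {V : Type*} [NormedAddCommGroup V] [InnerProductSpace ℂ V] [FiniteDimensional ℂ V]

/-- The orthogonal complement `X^{⊥, g_B}` of a set of vectors `X` with respect to the real
bilinear form `g_B(v, w) = Re h(B v, w)`, where the Hermitian inner product `h` is linear in
the first argument and conjugate-linear in the second; in Mathlib's convention
`h (B v) w = inner w (B v)`. It is a real subspace of `V`. -/
noncomputable def gperp (B : V →ₗ[ℂ] V) (X : Set V) : Submodule ℝ V where
  carrier := {v | ∀ x ∈ X, (inner ℂ x (B v) : ℂ).re = 0}
  zero_mem' := by intro x hx; simp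
  add_mem' := by
    intro a b ha hb x hx
    simp only [map_add, inner_add_right, Complex.add_re, ha x hx, hb x hx, add_zero]
  smul_mem' := by
    intro r v hv x hx
    rw [LinearMap.map_smul_of_tower, ← Complex.coe_smul, inner_smul_right]
    simp [hv x hx]

/-!
For the real inner product `Re h` on `V`, the `g_B`-complement of a real subspace `S` is the
preimage `B⁻¹(Sᗮ)`. A self-adjoint `T` satisfies `(T K)ᗮ = T⁻¹(Kᗮ)` and, taking complements in
finite dimension, `(T⁻¹ K)ᗮ = T(Kᗮ)`. Hence `W^{⊥,g_A} = A⁻¹(Wᗮ)`, then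
`(W^{⊥,g_A})^{⊥,g_C} = C⁻¹(A W)`, and finally the triple complement is
`A⁻¹(C(A⁻¹(Wᗮ)))`; as the image under `C` is the preimage under `Cinv`, this is
`(A ∘ Cinv ∘ A)⁻¹(Wᗮ)`.
-/

namespace LinearMap.IsSymmetric

variable {𝕜 E : Type*} [RCLike 𝕜] [NormedAddCommGroup E] [InnerProductSpace 𝕜 E]
  {T : E →ₗ[𝕜] E}

theorem orthogonal_map (hT : T.IsSymmetric) (K : Submodule 𝕜 E) :
    (K.map T)ᗮ = Kᗮ.comap T := by
  ext v
  simp only [Submodule.mem_orthogonal, Submodule.mem_comap, Submodule.mem_map,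
    forall_exists_index, and_imp, forall_apply_eq_imp_iff₂, hT _ v]

theorem orthogonal_comap [FiniteDimensional 𝕜 E] (hT : T.IsSymmetric) (K : Submodule 𝕜 E) :
    (K.comap T)ᗮ = Kᗮ.map T := by
  rw [← Submodule.orthogonal_orthogonal (Kᗮ.map T), hT.orthogonal_map,
    Submodule.orthogonal_orthogonal]

end LinearMap.IsSymmetric

section RealInner

attribute [local instance] InnerProductSpace.complexToReal

omit [FiniteDimensional ℂ V] in
theorem gperp_eq_comap_orthogonal (B : V →ₗ[ℂ] V) (S : Submodule ℝ V) :
    gperp B S = Sᗮ.comap (B.restrictScalars ℝ) :=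
  rfl

end RealInner

/-- Lemma 3.3 of the paper, operator form:
`((W^{⊥,g_A})^{⊥,g_C})^{⊥,g_A} = W^{⊥,g_D}` with `D = A ∘ C⁻¹ ∘ A`, for self-adjoint `A`, `C`
with `C` invertible (`Cinv` its two-sided inverse) and `W` any real subspace of `V`. -/
theorem stmt1 (A C Cinv : V →ₗ[ℂ] V)
    (hA : LinearMap.IsSymmetric A) (hC : LinearMap.IsSymmetric C)
    (hCinv₁ : C ∘ₗ Cinv = LinearMap.id) (hCinv₂ : Cinv ∘ₗ C = LinearMap.id)
    (W : Submodule ℝ V) :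
    gperp A (gperp C (gperp A (W : Set V))) = gperp (A ∘ₗ Cinv ∘ₗ A) (W : Set V) := by
  let _ : InnerProductSpace ℝ V := InnerProductSpace.complexToReal
  have hAr := hA.restrictScalars
  have hCr := hC.restrictScalars
  have map_C_eq_comap_Cinv (K : Submodule ℝ V) :
      K.map (C.restrictScalars ℝ) = K.comap (Cinv.restrictScalars ℝ) :=
    Submodule.map_equiv_eq_comap_symm
      ((LinearEquiv.ofLinearMap C Cinv hCinv₁ hCinv₂).restrictScalars ℝ) K
  simp only [gperp_eq_comap_orthogonal]
  rw [hAr.orthogonal_comap, Submodule.orthogonal_orthogonal, hCr.orthogonal_comap,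
    hAr.orthogonal_map, map_C_eq_comap_Cinv]
  rfl
end

section
/- Let V be a finite-dimensional complex inner product space with Hermitian inner product h, linear in the first argument; regard V also as a real vector space and let j denote multiplication by i. For a self-adjoint ℂ-linear endomorphism A of V let g_A(v,w) = Re h(Av,w) and X^{⊥,g_A} = {v ∈ V : g_A(v,x) = 0 for all x ∈ X} for a real subspace X; note g_{Id} = Re h. Let 𝒥 be a unital Jordan operator system on V, i.e. an ℝ-linear subspace of the ℂ-linear endomorphisms of V all of whose members are self-adjoint, containing the identity, and with A ∘ A ∈ 𝒥 whenever A ∈ 𝒥. Let W be a real subspace of V, and assume Im h(B s, s') = 0 for every B ∈ 𝒥 and all s, s' ∈ W^{⊥,Re h}. Then for every A ∈ 𝒥 and all v, w ∈ W^{⊥,g_A}, one has Im h(A v, w) = 0. -/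
variable {V : Type*} [NormedAddCommGroup V] [InnerProductSpace ℂ V] [FiniteDimensional ℂ V]

/-- A unital Jordan operator system on `V`: an ℝ-linear subspace of the ℂ-linear endomorphisms
of `V` all of whose members are self-adjoint, containing the identity, and closed under
squares. -/
structure IsJordanOperatorSystem (J : Set (V →ₗ[ℂ] V)) : Prop where
  symm_mem : ∀ A ∈ J, LinearMap.IsSymmetric A
  id_mem : LinearMap.id ∈ J
  sq_mem : ∀ A ∈ J, A ∘ₗ A ∈ J
  add_mem : ∀ A ∈ J, ∀ B ∈ J, A + B ∈ J
  smul_mem : ∀ (r : ℝ), ∀ A ∈ J, r • A ∈ J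

/-!
The symmetric operator `A` has a pseudo-inverse `B = p(A)` that is a real polynomial in `A`
(interpolate `μ ↦ μ⁻¹` on the spectrum), so `A B A = A` and `B ∈ 𝒥`. For `v, w ∈ W^{⊥,g_A}` the
vectors `A v, A w` lie in `W^{⊥,Re h}`, and `h(A v, w) = h(A B A v, w) = h(B (A v), A w)`, whose
imaginary part vanishes by hypothesis.
-/

open Polynomial

section

omit [FiniteDimensional ℂ V]

namespace IsJordanOperatorSystem

variable {J : Set (V →ₗ[ℂ] V)} (hJ : IsJordanOperatorSystem J)
include hJ

def toSubmodule : Submodule ℝ (Module.End ℂ V) where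
  carrier := J
  add_mem' ha hb := hJ.add_mem _ ha _ hb
  zero_mem' := by simpa using hJ.smul_mem 0 _ hJ.id_mem
  smul_mem' := hJ.smul_mem

lemma mul_add_mul_mem {A B : Module.End ℂ V} (hA : A ∈ J) (hB : B ∈ J) :
    A * B + B * A ∈ J := by
  have hsq := hJ.add_mem _ (hJ.sq_mem _ (hJ.add_mem _ hA _ hB)) _
    (hJ.smul_mem (-1) _ (hJ.add_mem _ (hJ.sq_mem _ hA) _ (hJ.sq_mem _ hB)))
  convert hsq using 1
  simp only [← Module.End.mul_eq_comp, neg_one_smul]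
  noncomm_ring

lemma pow_mem {A : Module.End ℂ V} (hA : A ∈ J) (n : ℕ) : A ^ n ∈ J := by
  induction n with
  | zero => exact hJ.id_mem
  | succ n ih =>
    convert hJ.smul_mem (2⁻¹ : ℝ) _ (hJ.mul_add_mul_mem ih hA) using 1
    rw [← pow_succ, ← pow_succ', ← two_smul ℝ, smul_smul, inv_mul_cancel₀ two_ne_zero, one_smul]

lemma aeval_mem {A : Module.End ℂ V} (hA : A ∈ J) (p : ℝ[X]) : aeval A p ∈ J := by
  rw [aeval_eq_sum_range]
  exact hJ.toSubmodule.sum_mem fun n _ ↦ hJ.toSubmodule.smul_mem _ (hJ.pow_mem hA n)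

end IsJordanOperatorSystem

lemma apply_mem_gperp_id_iff {A : Module.End ℂ V} {X : Set V} {v : V} :
    A v ∈ gperp LinearMap.id X ↔ v ∈ gperp A X :=
  Iff.rfl

end

lemma LinearMap.IsSymmetric.exists_mul_aeval_mul_eq_self {A : Module.End ℂ V}
    (hA : A.IsSymmetric) : ∃ p : ℝ[X], A * aeval A p * A = A := by
  classical
  let μ := hA.eigenvalues rfl
  let p := Lagrange.interpolate (Finset.univ.image μ) (fun x : ℝ ↦ x) fun x ↦ x⁻¹
  have hp : ∀ i, p.eval (μ i) = (μ i)⁻¹ := fun i ↦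
    Lagrange.eval_interpolate_at_node _ (Set.injOn_id _) (Finset.mem_image_of_mem μ (by simp))
  refine ⟨p, (hA.eigenvectorBasis rfl).toBasis.ext fun i ↦ ?_⟩
  have he := hA.apply_eigenvectorBasis rfl i
  rw [OrthonormalBasis.coe_toBasis, Module.End.mul_apply, Module.End.mul_apply, he, map_smul,
    ← aeval_map_algebraMap ℂ, Module.End.aeval_apply_of_mem_apply_eq_smul he, eval_map_algebraMap,
    aeval_ofReal, hp, smul_smul, map_smul, he, smul_smul]
  -- `0⁻¹ = 0` makes `μ * μ⁻¹ * μ = μ` hold at zero eigenvalues as well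
  congr 1
  exact_mod_cast mul_inv_mul_cancel (μ i)

/-- Proposition 3.4 of the paper, operator form: if
`Im h(B s, s') = 0` for all `B ∈ 𝒥` and `s, s' ∈ W^{⊥, Re h}`, then for every `A ∈ 𝒥` and
all `v, w ∈ W^{⊥, g_A}`, one has `Im h(A v, w) = 0`; here `Im h(A v, w) = (inner w (A v)).im`. -/
theorem stmt2 (J : Set (V →ₗ[ℂ] V)) (hJ : IsJordanOperatorSystem J)
    (W : Submodule ℝ V)
    (hS : ∀ B ∈ J, ∀ s ∈ gperp LinearMap.id (W : Set V),
      ∀ s' ∈ gperp LinearMap.id (W : Set V), (inner ℂ s' (B s) : ℂ).im = 0)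
    (A : V →ₗ[ℂ] V) (hA : A ∈ J)
    (v w : V) (hv : v ∈ gperp A (W : Set V)) (hw : w ∈ gperp A (W : Set V)) :
    (inner ℂ w (A v) : ℂ).im = 0 := by
  have hsymm : A.IsSymmetric := hJ.symm_mem A hA
  obtain ⟨p, hp⟩ := hsymm.exists_mul_aeval_mul_eq_self
  calc (inner ℂ w (A v) : ℂ).im = (inner ℂ w (A (aeval A p (A v))) : ℂ).im := by
        rw [← Module.End.mul_apply, ← Module.End.mul_apply, hp]
    _ = (inner ℂ (A w) (aeval A p (A v)) : ℂ).im := by rw [hsymm]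
    _ = 0 := hS _ (hJ.aeval_mem hA p) _ (apply_mem_gperp_id_iff.mpr hv) _
        (apply_mem_gperp_id_iff.mpr hw)
end

section
/- Let V be a finite-dimensional complex inner product space with Hermitian inner product h, linear in the first argument; regard V as a real vector space and let j denote multiplication by i. For a self-adjoint ℂ-linear endomorphism A of V let g_A(v,w) = Re h(Av,w), and for a real subspace X let X^{⊥,g_A} = {v ∈ V : g_A(v,x) = 0 for all x ∈ X}. Let 𝒥 be a unital Jordan operator system on V, i.e. an ℝ-linear subspace of the ℂ-linear endomorphisms of V all of whose members are self-adjoint, containing the identity, and with A ∘ A ∈ 𝒥 whenever A ∈ 𝒥. Let W be a real subspace of V. Assume that for every positive-definite A ∈ 𝒥 (i.e. h(Av,v) > 0 for all v ≠ 0) one has j(W^{⊥,g_A}) ⊆ W. Then Im h(B s, s') = 0 for every B ∈ 𝒥 and all s, s' ∈ (jW)^{⊥,Re h}. -/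
open ComplexOrder

variable {V : Type*} [NormedAddCommGroup V] [InnerProductSpace ℂ V] [FiniteDimensional ℂ V]

/-- Multiplication by `i` on `V`, seen as an ℝ-linear endomorphism `j`. -/
noncomputable def smulI : V →ₗ[ℝ] V where
  toFun v := Complex.I • v
  map_add' a b := smul_add _ a b
  map_smul' r v := by
    simp only [RingHom.id_apply]
    rw [smul_comm]

/-! Let `S = (jW)^{⊥, Re h} = {v | Im h(v, w) = 0 for all w ∈ W}`. For a positive-definite
`A ∈ 𝒥` the hypothesis, applied to `j u`, says `A u ∈ S → u ∈ W`. With `A = 1` this gives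
`S ⊆ W`. For small `t ≠ 0` the operator `A = 1 + tB ∈ 𝒥` is positive definite, hence invertible:
writing `s = u + tBu` we get `u ∈ W`, so `Im h(Bu, s') = 0`, and therefore
`Im h(Bs, s') = t · Im h(B²u, s')`. Since `‖u‖ ≤ 2‖s‖`, this is `O(t)`, and letting `t → 0`
gives `Im h(Bs, s') = 0`. -/

open Filter Topology

section

variable {E : Type*} [NormedAddCommGroup E] [InnerProductSpace ℂ E]

lemma mem_gperp_id_map_smulI_iff {W : Submodule ℝ E} {v : E} :
    v ∈ gperp LinearMap.id (W.map smulI : Set E) ↔ ∀ w ∈ W, (inner ℂ w v).im = 0 := by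
  simp [gperp, smulI]

lemma mem_of_forall_im_inner_eq_zero {A : E →ₗ[ℂ] E} {W : Submodule ℝ E}
    (hA : ∀ v ∈ gperp A (W : Set E), Complex.I • v ∈ W) {u : E}
    (hu : ∀ w ∈ W, (inner ℂ w (A u)).im = 0) : u ∈ W := by
  have hIu : Complex.I • u ∈ gperp A (W : Set E) := fun w hw => by simp [hu w hw]
  simpa [smul_smul] using hA _ hIu

lemma LinearMap.IsSymmetric.inner_map_self_pos_of_re_pos {A : E →ₗ[ℂ] E} (hA : A.IsSymmetric)
    {v : E} (h : 0 < (inner ℂ v (A v)).re) : 0 < inner ℂ v (A v) := by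
  rw [← hA.coe_re_inner_self_apply]
  exact Complex.zero_lt_real.mpr h

variable {B : E →ₗ[ℂ] E} {C t : ℝ}

lemma half_norm_sq_le_re_inner_add_smul (hBC : ∀ v, ‖B v‖ ≤ C * ‖v‖) (ht : |t| * C ≤ 1 / 2)
    (v : E) : ‖v‖ ^ 2 / 2 ≤ (inner ℂ v (v + t • B v)).re := by
  have hBv : |(inner ℂ v (B v)).re| ≤ C * ‖v‖ ^ 2 := calc
    _ ≤ ‖inner ℂ v (B v)‖ := Complex.abs_re_le_norm _
    _ ≤ ‖v‖ * ‖B v‖ := norm_inner_le_norm _ _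
    _ ≤ ‖v‖ * (C * ‖v‖) := by gcongr; exact hBC v
    _ = C * ‖v‖ ^ 2 := by ring
  have hre : (inner ℂ v (v + t • B v)).re = ‖v‖ ^ 2 + t * (inner ℂ v (B v)).re := by
    rw [inner_add_right, ← Complex.coe_smul, inner_smul_right, Complex.add_re,
      Complex.re_ofReal_mul, ← inner_self_eq_norm_sq (𝕜 := ℂ)]
    rfl
  rw [hre]
  have := neg_abs_le (t * (inner ℂ v (B v)).re)
  rw [abs_mul] at this
  nlinarith [mul_le_mul_of_nonneg_left hBv (abs_nonneg t),
    mul_le_mul_of_nonneg_right ht (sq_nonneg ‖v‖)]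

lemma exists_add_smul_apply_eq_and_norm_le [FiniteDimensional ℂ E] (hBC : ∀ v, ‖B v‖ ≤ C * ‖v‖)
    (ht : |t| * C ≤ 1 / 2) (s : E) : ∃ u, u + t • B u = s ∧ ‖u‖ ≤ 2 * ‖s‖ := by
  let A : E →ₗ[ℂ] E := LinearMap.id + t • B
  have hA : ∀ v, A v = v + t • B v := fun v => rfl
  have hinj : Function.Injective A := by
    rw [← LinearMap.ker_eq_bot, LinearMap.ker_eq_bot']
    intro v hv
    have hle := half_norm_sq_le_re_inner_add_smul hBC ht v
    rw [← hA, hv, inner_zero_right, Complex.zero_re] at hle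
    have hv2 : ‖v‖ ^ 2 = 0 := by linarith [sq_nonneg ‖v‖]
    simpa using hv2
  obtain ⟨u, hu⟩ := LinearMap.injective_iff_surjective.mp hinj s
  refine ⟨u, hu, ?_⟩
  have h1 := half_norm_sq_le_re_inner_add_smul hBC ht u
  rw [← hA, hu] at h1
  have h2 : (inner ℂ u s).re ≤ ‖u‖ * ‖s‖ := (Complex.re_le_norm _).trans (norm_inner_le_norm _ _)
  nlinarith [norm_nonneg u, norm_nonneg s]

lemma im_inner_apply_eq_mul_of_add_smul_apply_eq {W : Submodule ℝ E} {s s' u : E} (ht : t ≠ 0)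
    (hs' : ∀ w ∈ W, (inner ℂ s' w).im = 0) (hs : s ∈ W) (hu : u ∈ W) (hsu : u + t • B u = s) :
    (inner ℂ s' (B s)).im = t * (inner ℂ s' (B (B u))).im := by
  have him : ∀ x y : E, (inner ℂ s' (x + t • y)).im = (inner ℂ s' x).im + t * (inner ℂ s' y).im :=
    fun x y => by
      rw [inner_add_right, ← Complex.coe_smul, inner_smul_right, Complex.add_im,
        Complex.im_ofReal_mul]
  have hBu : (inner ℂ s' (B u)).im = 0 := by
    have := him u (B u)
    rw [hsu, hs' s hs, hs' u hu, zero_add, eq_comm, mul_eq_zero] at this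
    exact this.resolve_left ht
  rw [← hsu, map_add, LinearMap.map_smul_of_tower, him, hBu, zero_add]

theorem im_inner_apply_eq_zero_of_forall_add_smul [FiniteDimensional ℂ E] {W : Submodule ℝ E}
    (hC : 0 ≤ C) (hBC : ∀ v, ‖B v‖ ≤ C * ‖v‖)
    (hW : ∀ t : ℝ, |t| * C ≤ 1 / 2 → ∀ u, (∀ w ∈ W, (inner ℂ w (u + t • B u)).im = 0) → u ∈ W)
    {s s' : E} (hs : ∀ w ∈ W, (inner ℂ w s).im = 0) (hs' : ∀ w ∈ W, (inner ℂ s' w).im = 0) :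
    (inner ℂ s' (B s)).im = 0 := by
  have hsW : s ∈ W := hW 0 (by simp) s (by simpa using hs)
  have habs (c : ℝ) : Tendsto (fun t : ℝ => |t| * c) (𝓝 0) (𝓝 0) := by
    simpa using (continuous_abs.tendsto' (0 : ℝ) 0 abs_zero).mul_const c
  have hsmall : ∀ᶠ t in 𝓝 (0 : ℝ), |t| * C ≤ 1 / 2 :=
    (habs C).eventually (ge_mem_nhds (by norm_num))
  set K := C ^ 2 * (2 * ‖s‖) * ‖s'‖
  have hbound : ∀ᶠ t in 𝓝[≠] (0 : ℝ), |(inner ℂ s' (B s)).im| ≤ |t| * K := by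
    filter_upwards [self_mem_nhdsWithin, nhdsWithin_le_nhds hsmall] with t ht0 ht
    obtain ⟨u, hsu, hu⟩ := exists_add_smul_apply_eq_and_norm_le hBC ht s
    have huW : u ∈ W := hW t ht u (by rwa [hsu])
    rw [im_inner_apply_eq_mul_of_add_smul_apply_eq ht0 hs' hsW huW hsu, abs_mul]
    gcongr
    calc |(inner ℂ s' (B (B u))).im| ≤ ‖s'‖ * ‖B (B u)‖ :=
          (Complex.abs_im_le_norm _).trans (norm_inner_le_norm _ _)
      _ ≤ ‖s'‖ * (C * (C * (2 * ‖s‖))) := by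
          gcongr
          exact (hBC _).trans (by gcongr; exact (hBC u).trans (by gcongr))
      _ = K := by ring
  exact abs_nonpos_iff.mp (ge_of_tendsto ((habs K).mono_left nhdsWithin_le_nhds) hbound)

end

/-- key step of Theorems 5.3 and 6.1 of the paper, operator form: if for every
positive-definite `A ∈ 𝒥` (i.e. `h(A v, v) > 0` for `v ≠ 0`, with `h(A v, v) = inner v (A v)`
a positive real, using the complex order) one has `j (W^{⊥, g_A}) ⊆ W`, then
`Im h(B s, s') = 0` for every `B ∈ 𝒥` and all `s, s' ∈ (jW)^{⊥, Re h}`. -/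
theorem stmt8 (J : Set (V →ₗ[ℂ] V)) (hJ : IsJordanOperatorSystem J)
    (W : Submodule ℝ V)
    (hpos : ∀ A ∈ J, (∀ v : V, v ≠ 0 → 0 < (inner ℂ v (A v) : ℂ)) →
      ∀ v ∈ gperp A (W : Set V), Complex.I • v ∈ W)
    (B : V →ₗ[ℂ] V) (hB : B ∈ J)
    (s : V) (hs : s ∈ gperp LinearMap.id ((W.map smulI : Submodule ℝ V) : Set V))
    (s' : V) (hs' : s' ∈ gperp LinearMap.id ((W.map smulI : Submodule ℝ V) : Set V)) :
    (inner ℂ s' (B s) : ℂ).im = 0 := by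
  rw [mem_gperp_id_map_smulI_iff] at hs hs'
  have hBC (v : V) := (LinearMap.toContinuousLinearMap B).le_opNorm v
  refine im_inner_apply_eq_zero_of_forall_add_smul (norm_nonneg _) hBC ?_ hs
    (fun w hw => by rw [← inner_conj_symm, Complex.conj_im, hs' w hw, neg_zero])
  intro t ht u hu
  have hAJ : LinearMap.id + t • B ∈ J := hJ.add_mem _ hJ.id_mem _ (hJ.smul_mem t B hB)
  have hApos (v : V) (hv : v ≠ 0) : 0 < inner ℂ v ((LinearMap.id + t • B : V →ₗ[ℂ] V) v) :=
    (hJ.symm_mem _ hAJ).inner_map_self_pos_of_re_pos <|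
      (by positivity : 0 < ‖v‖ ^ 2 / 2).trans_le (half_norm_sq_le_re_inner_add_smul hBC ht v)
  exact mem_of_forall_im_inner_eq_zero (hpos _ hAJ hApos) hu
end

section
/- Let V be a finite-dimensional complex inner product space with Hermitian inner product h, linear in the first argument; regard V as a real vector space and let j denote multiplication by i. For a self-adjoint ℂ-linear endomorphism A of V let g_A(v,w) = Re h(Av,w), and for a real subspace X let X^{⊥,g_A} = {v ∈ V : g_A(v,x) = 0 for all x ∈ X}. Let 𝒥 be a unital Jordan operator system on V, i.e. an ℝ-linear subspace of the ℂ-linear endomorphisms of V all of whose members are self-adjoint, containing the identity, and with A ∘ A ∈ 𝒥 whenever A ∈ 𝒥. Let W be a real subspace of V and S := (jW)^{⊥,Re h}, and assume Im h(B s, s') = 0 for every B ∈ 𝒥 and all s, s' ∈ S. Let E ∈ 𝒥 be positive definite (h(Ev,v) > 0 for all v ≠ 0) and let A ∈ 𝒥 satisfy A ∘ E = E ∘ A. Then j(A(W^{⊥,g_E})) ⊆ W. -/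
open ComplexOrder

variable {V : Type*} [NormedAddCommGroup V] [InnerProductSpace ℂ V] [FiniteDimensional ℂ V]

/-!
Positive definiteness makes `E` invertible, and in the finite-dimensional real algebra generated
by `E` its inverse is a real polynomial `p(E)`. Since `A` commutes with `E`, the Jordan identity
`2BC = (B + C)² - B² - C²` for commuting `B, C` shows `C := A p(E) = A E⁻¹ ∈ 𝒥`. For `v ⊥_{g_E} W`
the vector `s₀ = i E v` lies in `S = (jW)^⊥`, and `A v = C E v = -i C s₀`. The hypothesis on
`S` says exactly that `i C s₀ ⊥ S`, so `A v ∈ S^⊥ = jW`, i.e. `i A v ∈ W`.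
-/

open Polynomial

theorem exists_aeval_mul_eq_one_of_isLeftRegular {K A : Type*} [Field K] [Ring A] [Algebra K A]
    [FiniteDimensional K A] {x : A} (hx : IsLeftRegular x) : ∃ p : K[X], aeval x p * x = 1 := by
  let b : Algebra.adjoin K {x} := ⟨x, Algebra.self_mem_adjoin_singleton K x⟩
  have hinj : Function.Injective (LinearMap.mulLeft K b) := fun c d h =>
    Subtype.ext (hx (congrArg Subtype.val h))
  obtain ⟨c, hc⟩ := LinearMap.injective_iff_surjective.mp hinj 1
  obtain ⟨p, hp⟩ : (c : A) ∈ (aeval (R := K) x).range := by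
    rw [← Algebra.adjoin_singleton_eq_range_aeval]; exact c.2
  refine ⟨p, ?_⟩
  have hcomm : Commute x (aeval x p) := by simpa using (commute_X p).map (aeval x)
  rw [← hcomm.eq]
  exact (congrArg (x * ·) hp).trans (congrArg Subtype.val hc)

section
omit [FiniteDimensional ℂ V]

namespace IsJordanOperatorSystem

variable {J : Set (Module.End ℂ V)} (hJ : IsJordanOperatorSystem J)
include hJ

theorem mul_mem_of_commute {B C : Module.End ℂ V} (hB : B ∈ J) (hC : C ∈ J) (h : Commute B C) :
    B * C ∈ J := by
  have key :
      B * C = (2⁻¹ : ℝ) • ((B + C) * (B + C) + ((-1 : ℝ) • (B * B) + (-1 : ℝ) • (C * C))) := by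
    rw [add_mul, mul_add, mul_add, ← h.eq]
    module
  rw [key]
  exact hJ.smul_mem _ _ (hJ.add_mem _ (hJ.sq_mem _ (hJ.add_mem _ hB _ hC)) _
    (hJ.add_mem _ (hJ.smul_mem _ _ (hJ.sq_mem _ hB)) _ (hJ.smul_mem _ _ (hJ.sq_mem _ hC))))

theorem mul_pow_mem_of_commute {A E : Module.End ℂ V} (hA : A ∈ J) (hE : E ∈ J)
    (h : Commute A E) (n : ℕ) : A * E ^ n ∈ J := by
  induction n with
  | zero => simpa using hA
  | succ n ih =>
    rw [pow_succ, ← mul_assoc]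
    exact hJ.mul_mem_of_commute ih hE (h.mul_left ((Commute.refl E).pow_left n))

theorem mul_aeval_mem_of_commute {A E : Module.End ℂ V} (hA : A ∈ J) (hE : E ∈ J)
    (h : Commute A E) (p : ℝ[X]) : A * aeval E p ∈ J := by
  induction p using Polynomial.induction_on' with
  | add p q hp hq => rw [map_add, mul_add]; exact hJ.add_mem _ hp _ hq
  | monomial n c =>
    rw [aeval_monomial, ← Algebra.smul_def, mul_smul_comm]
    exact hJ.smul_mem c _ (hJ.mul_pow_mem_of_commute hA hE h n)

end IsJordanOperatorSystem

theorem smulI_apply (v : V) : smulI v = Complex.I • v := rfl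

theorem I_smul_mem_gperp_id_iff {X : Set V} {w : V} :
    Complex.I • w ∈ gperp LinearMap.id X ↔ ∀ x ∈ X, (inner ℂ x w : ℂ).im = 0 := by
  simp [gperp]

theorem I_smul_mem_gperp_id_map_smulI {B : Module.End ℂ V} {W : Submodule ℝ V} {v : V}
    (hv : v ∈ gperp B W) : Complex.I • B v ∈ gperp LinearMap.id (W.map smulI) := by
  rintro - ⟨w, hw, rfl⟩
  simpa [smulI_apply, inner_smul_left, inner_smul_right, ← mul_assoc] using hv w hw

theorem I_smul_mem_of_mem_map_smulI {W : Submodule ℝ V} {u : V} (hu : u ∈ W.map smulI) :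
    Complex.I • u ∈ W := by
  obtain ⟨w, hw, rfl⟩ := hu
  simpa [smulI_apply, smul_smul] using W.neg_mem hw

theorem injective_of_forall_inner_pos {E : Module.End ℂ V}
    (hE : ∀ v : V, v ≠ 0 → 0 < (inner ℂ v (E v) : ℂ)) : Function.Injective E := by
  refine (injective_iff_map_eq_zero E).mpr fun v hv => ?_
  by_contra hne
  simpa [hv] using hE v hne

end

theorem gperp_id_gperp_id (K : Submodule ℝ V) :
    gperp LinearMap.id (gperp LinearMap.id (K : Set V) : Set V) = K := by
  let _ : InnerProductSpace ℝ V := InnerProductSpace.complexToReal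
  have h (X : Submodule ℝ V) : gperp LinearMap.id (X : Set V) = Xᗮ := by
    ext u
    simp [gperp, Submodule.mem_orthogonal, real_inner_eq_re_inner]
  rw [h, h, Submodule.orthogonal_orthogonal]

/-- core of the proof of Theorem 6.5 of the paper, operator form: with
`S = (jW)^{⊥, Re h}` and `Im h(B s, s') = 0` for every `B ∈ 𝒥` and all `s, s' ∈ S`, if
`E ∈ 𝒥` is positive definite (`h(E v, v) = inner v (E v) > 0` for `v ≠ 0`, complex order)
and `A ∈ 𝒥` commutes with `E`, then `j (A (W^{⊥, g_E})) ⊆ W`. -/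
theorem stmt9 (J : Set (V →ₗ[ℂ] V)) (hJ : IsJordanOperatorSystem J)
    (W : Submodule ℝ V)
    (hS : ∀ B ∈ J, ∀ s ∈ gperp LinearMap.id ((W.map smulI : Submodule ℝ V) : Set V),
      ∀ s' ∈ gperp LinearMap.id ((W.map smulI : Submodule ℝ V) : Set V),
        (inner ℂ s' (B s) : ℂ).im = 0)
    (E : V →ₗ[ℂ] V) (hE : E ∈ J)
    (hEpos : ∀ v : V, v ≠ 0 → 0 < (inner ℂ v (E v) : ℂ))
    (A : V →ₗ[ℂ] V) (hA : A ∈ J)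
    (hcomm : A ∘ₗ E = E ∘ₗ A)
    (v : V) (hv : v ∈ gperp E (W : Set V)) :
    Complex.I • (A v) ∈ W := by
  have hEreg : IsLeftRegular E := fun f g h =>
    LinearMap.ext fun u => injective_of_forall_inner_pos hEpos (LinearMap.congr_fun h u)
  obtain ⟨p, hp⟩ := exists_aeval_mul_eq_one_of_isLeftRegular (K := ℝ) hEreg
  set C := A * aeval E p
  have hCJ : C ∈ J := hJ.mul_aeval_mem_of_commute hA hE hcomm p
  have hCE : C * E = A := by rw [mul_assoc, hp, mul_one]
  set s₀ := Complex.I • E v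
  have hs₀ : s₀ ∈ gperp LinearMap.id (W.map smulI) := I_smul_mem_gperp_id_map_smulI hv
  have hCs₀ : Complex.I • C s₀ ∈ W.map smulI := by
    rw [← gperp_id_gperp_id (W.map smulI), I_smul_mem_gperp_id_iff]
    exact fun s hs => hS C hCJ s₀ hs₀ s hs
  have hAv : A v = -(Complex.I • C s₀) := by
    have hEv : E v = -(Complex.I • s₀) := by simp [s₀, smul_smul]
    rw [← hCE, Module.End.mul_apply, hEv, map_neg, map_smul]
  rw [hAv]
  exact I_smul_mem_of_mem_map_smulI ((W.map smulI).neg_mem hCs₀)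
end

section
/- Let U be a finite-dimensional real vector space equipped with a commutative bilinear product (a,b) ↦ ab; write T_a for the left multiplication operator T_a b = ab, and assume the linearized Jordan identity [T_a, T_{bc}] + [T_b, T_{ca}] + [T_c, T_{ab}] = 0 for all a, b, c ∈ U. Let e₁, y, x₁, x₀ ∈ U satisfy e₁e₁ = e₁, e₁y = (1/2)y, e₁x₁ = x₁, and e₁x₀ = 0. Set L := T_y + 2[T_{e₁}, T_y]. Then L x₁ = 0, L³ x₀ = 0, and exp(L)(x₁ + x₀) = (x₁ + 2 T_{e₁}(T_y)² x₀) + 2 T_y x₀ + x₀, where exp denotes the exponential of the linear endomorphism L of U. -/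
/-!
The operator `L = e₁ □ (2y)` moves the Peirce spaces of `e₁` up by one half: it kills
`U(e₁,1)`, acts as `2 T_y` on `U(e₁,0)` and as `2 T_{e₁} T_y` on `U(e₁,1/2)`. The Peirce rules
behind this (`T_y` maps `U(e₁,0)` and `U(e₁,1)` into `U(e₁,1/2)`, and `T_{e₁} T_y T_y` maps
`U(e₁,0)` into `U(e₁,1)`) are instances of the linearized Jordan identity. So `L x₁ = 0`,
`x₀ ↦ 2 T_y x₀ ↦ 4 T_{e₁} T_y² x₀ ↦ 0`, and the exponential series truncates.
-/

open Nat in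
theorem NormedSpace.exp_apply_eq_sum_of_pow_apply_eq_zero {𝕂 E : Type*} [RCLike 𝕂]
    [NormedAddCommGroup E] [NormedSpace 𝕂 E] [CompleteSpace E] (M : E →L[𝕂] E) {v : E} {n : ℕ}
    (hv : (M ^ n) v = 0) :
    NormedSpace.exp M v = ∑ k ∈ Finset.range n, (k !⁻¹ : 𝕂) • (M ^ k) v := by
  have hsum := (NormedSpace.exp_series_hasSum_exp' (𝕂 := 𝕂) M).mapL
    (ContinuousLinearMap.apply 𝕂 E v)
  refine hsum.unique (hasSum_sum_of_ne_finset_zero fun k hk => ?_)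
  obtain ⟨j, rfl⟩ := Nat.exists_eq_add_of_le' (not_lt.mp (Finset.mem_range.not.mp hk))
  rw [ContinuousLinearMap.apply_apply, smul_apply, pow_add, mul_apply_eq_comp, hv, map_zero,
    smul_zero]

section LinearizedJordan

variable {R U : Type*} [CommRing R] [AddCommGroup U] [Module R U]

structure IsLinearizedJordan (mul : U →ₗ[R] U →ₗ[R] U) : Prop where
  comm : ∀ a b : U, mul a b = mul b a
  jordan : ∀ a b c : U,
    (mul a ∘ₗ mul (mul b c) - mul (mul b c) ∘ₗ mul a)
      + (mul b ∘ₗ mul (mul c a) - mul (mul c a) ∘ₗ mul b)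
      + (mul c ∘ₗ mul (mul a b) - mul (mul a b) ∘ₗ mul c) = 0

theorem IsLinearizedJordan.jordan_apply {mul : U →ₗ[R] U →ₗ[R] U} (h : IsLinearizedJordan mul)
    (a b c v : U) :
    (mul a (mul (mul b c) v) - mul (mul b c) (mul a v))
      + (mul b (mul (mul c a) v) - mul (mul c a) (mul b v))
      + (mul c (mul (mul a b) v) - mul (mul a b) (mul c v)) = 0 := by
  simpa using LinearMap.congr_fun (h.jordan a b c) v

theorem IsLinearizedJordan.peirce_relation {mul : U →ₗ[R] U →ₗ[R] U} {e : U}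
    (hJ : IsLinearizedJordan mul) (he : mul e e = e) (z v : U) :
    (2 : R) • (mul e (mul (mul e z) v) - mul (mul e z) (mul e v))
      + (mul z (mul e v) - mul e (mul z v)) = 0 := by
  have h := hJ.jordan_apply e e z v
  rw [hJ.comm z e, he] at h
  linear_combination (norm := module) h

/-- The paper's `a □ b = T_{ab} + [T_a, T_b]`. -/
def box (mul : U →ₗ[R] U →ₗ[R] U) (a b : U) : U →ₗ[R] U :=
  mul (mul a b) + (mul a ∘ₗ mul b - mul b ∘ₗ mul a)

end LinearizedJordan

section Peirce

variable {K U : Type*} [Field K] [CharZero K] [AddCommGroup U] [Module K U]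
  {mul : U →ₗ[K] U →ₗ[K] U} {e y u : U}

theorem box_two_smul_of_half (hy : mul e y = (1 / 2 : K) • y) :
    box mul e ((2 : K) • y) = mul y + (2 : K) • (mul e ∘ₗ mul y - mul y ∘ₗ mul e) := by
  rw [box, map_smul, hy, smul_smul]
  ext v
  simp only [LinearMap.add_apply, LinearMap.smul_apply, LinearMap.sub_apply,
    LinearMap.comp_apply, map_smul]
  module

theorem box_two_smul_apply_of_half (hy : mul e y = (1 / 2 : K) • y)
    (hu : mul e u = (1 / 2 : K) • u) :
    box mul e ((2 : K) • y) u = (2 : K) • mul e (mul y u) := by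
  rw [box_two_smul_of_half hy]
  simp only [LinearMap.add_apply, LinearMap.smul_apply, LinearMap.sub_apply,
    LinearMap.comp_apply, hu, map_smul]
  module

namespace IsLinearizedJordan

theorem mul_mul_eq_half_smul_of_one (hJ : IsLinearizedJordan mul) (he : mul e e = e)
    (hy : mul e y = (1 / 2 : K) • y) (hu : mul e u = u) :
    mul e (mul y u) = (1 / 2 : K) • mul y u := by
  have h := hJ.peirce_relation he u y
  rw [hu, hy, map_smul, hJ.comm u y] at h
  linear_combination (norm := module) h

theorem mul_mul_eq_half_smul_of_zero (hJ : IsLinearizedJordan mul) (he : mul e e = e)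
    (hy : mul e y = (1 / 2 : K) • y) (hu : mul e u = 0) :
    mul e (mul y u) = (1 / 2 : K) • mul y u := by
  have h := hJ.peirce_relation he u y
  simp only [hu, hy, map_smul, hJ.comm u y, map_zero, LinearMap.zero_apply, smul_zero] at h
  linear_combination (norm := module) -h

theorem mul_mul_self_mul_eq_zero_of_zero (hJ : IsLinearizedJordan mul)
    (hy : mul e y = (1 / 2 : K) • y) (hu : mul e u = 0) :
    mul e (mul (mul y y) u) = 0 := by
  have h := hJ.jordan_apply y y e u
  rw [hJ.comm y e, hy, hu, map_zero] at h
  simp only [map_smul, LinearMap.smul_apply] at h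
  linear_combination (norm := module) h

theorem mul_mul_mul_eq_of_zero (hJ : IsLinearizedJordan mul)
    (hy : mul e y = (1 / 2 : K) • y) (hu : mul e u = 0) :
    mul e (mul y (mul y u)) = mul y (mul y u) - (1 / 2 : K) • mul (mul y y) u := by
  have h := hJ.jordan_apply e y u y
  simp only [hy, hJ.comm u e, hu, hJ.comm (mul y u) y, hJ.comm u (mul y y), hJ.comm u y,
    map_smul, map_zero, LinearMap.smul_apply, LinearMap.zero_apply] at h
  linear_combination (norm := module) h

theorem mul_mul_mul_mul_eq_of_zero (hJ : IsLinearizedJordan mul)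
    (hy : mul e y = (1 / 2 : K) • y) (hu : mul e u = 0) :
    mul e (mul e (mul y (mul y u))) = mul e (mul y (mul y u)) := by
  rw [hJ.mul_mul_mul_eq_of_zero hy hu, map_sub, map_smul,
    hJ.mul_mul_self_mul_eq_zero_of_zero hy hu, smul_zero, sub_zero,
    hJ.mul_mul_mul_eq_of_zero hy hu]

theorem box_two_smul_apply_of_one (hJ : IsLinearizedJordan mul) (he : mul e e = e)
    (hy : mul e y = (1 / 2 : K) • y) (hu : mul e u = u) : box mul e ((2 : K) • y) u = 0 := by
  rw [box_two_smul_of_half hy]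
  simp only [LinearMap.add_apply, LinearMap.smul_apply, LinearMap.sub_apply,
    LinearMap.comp_apply, hu, hJ.mul_mul_eq_half_smul_of_one he hy hu]
  module

theorem box_two_smul_apply_of_zero (hJ : IsLinearizedJordan mul) (he : mul e e = e)
    (hy : mul e y = (1 / 2 : K) • y) (hu : mul e u = 0) :
    box mul e ((2 : K) • y) u = (2 : K) • mul y u := by
  rw [box_two_smul_of_half hy]
  simp only [LinearMap.add_apply, LinearMap.smul_apply, LinearMap.sub_apply,
    LinearMap.comp_apply, hu, map_zero, hJ.mul_mul_eq_half_smul_of_zero he hy hu]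
  module

end IsLinearizedJordan

end Peirce

/-- Lemma 5.1 of the paper: in a (finite-dimensional, normed so that the
exponential makes sense) real vector space `U` with a commutative bilinear product satisfying
the linearized Jordan identity, for `e₁, y, x₁, x₀` with `e₁e₁ = e₁`, `e₁y = (1/2)y`,
`e₁x₁ = x₁`, `e₁x₀ = 0`, the operator `L := T_y + 2[T_{e₁}, T_y]` kills `x₁`, is cubically
nilpotent on `x₀`, and satisfies
`exp(L)(x₁ + x₀) = (x₁ + 2 T_{e₁}(T_y)² x₀) + 2 T_y x₀ + x₀`. -/
theorem stmt10 {U : Type*} [NormedAddCommGroup U] [NormedSpace ℝ U] [FiniteDimensional ℝ U]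
    (mul : U →ₗ[ℝ] U →ₗ[ℝ] U)
    (hcomm : ∀ a b : U, mul a b = mul b a)
    (hjordan : ∀ a b c : U,
      (mul a ∘ₗ mul (mul b c) - mul (mul b c) ∘ₗ mul a)
        + (mul b ∘ₗ mul (mul c a) - mul (mul c a) ∘ₗ mul b)
        + (mul c ∘ₗ mul (mul a b) - mul (mul a b) ∘ₗ mul c) = 0)
    (e₁ y x₁ x₀ : U)
    (he₁ : mul e₁ e₁ = e₁) (hy : mul e₁ y = (1 / 2 : ℝ) • y)
    (hx₁ : mul e₁ x₁ = x₁) (hx₀ : mul e₁ x₀ = 0)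
    (L : U →ₗ[ℝ] U)
    (hL : L = mul y + (2 : ℝ) • (mul e₁ ∘ₗ mul y - mul y ∘ₗ mul e₁)) :
    L x₁ = 0 ∧ (L ∘ₗ L ∘ₗ L) x₀ = 0 ∧
      NormedSpace.exp (LinearMap.toContinuousLinearMap L) (x₁ + x₀) =
        (x₁ + (2 : ℝ) • mul e₁ (mul y (mul y x₀))) + (2 : ℝ) • mul y x₀ + x₀ := by
  have hJ : IsLinearizedJordan mul := ⟨hcomm, hjordan⟩
  rw [← box_two_smul_of_half hy] at hL
  subst hL
  set L := box mul e₁ ((2 : ℝ) • y)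
  have hLx₁ : L x₁ = 0 := hJ.box_two_smul_apply_of_one he₁ hy hx₁
  have hLx₀ : L x₀ = (2 : ℝ) • mul y x₀ := hJ.box_two_smul_apply_of_zero he₁ hy hx₀
  have hLyx₀ : L (mul y x₀) = (2 : ℝ) • mul e₁ (mul y (mul y x₀)) :=
    box_two_smul_apply_of_half hy (hJ.mul_mul_eq_half_smul_of_zero he₁ hy hx₀)
  have hLeyyx₀ : L (mul e₁ (mul y (mul y x₀))) = 0 :=
    hJ.box_two_smul_apply_of_one he₁ hy (hJ.mul_mul_mul_mul_eq_of_zero hy hx₀)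
  have hLLLx₀ : L (L (L x₀)) = 0 := by simp only [hLx₀, hLyx₀, hLeyyx₀, map_smul, smul_zero]
  refine ⟨hLx₁, hLLLx₀, ?_⟩
  set M := LinearMap.toContinuousLinearMap L
  have hpow (k : ℕ) (v : U) : (M ^ k) v = (L ^ k) v := by
    rw [FunLike.coe_pow_eq_iterate, Module.End.coe_pow]
    rfl
  rw [map_add,
    NormedSpace.exp_apply_eq_sum_of_pow_apply_eq_zero M (n := 1) (by rw [hpow]; simpa),
    NormedSpace.exp_apply_eq_sum_of_pow_apply_eq_zero M (n := 3) (by rw [hpow]; simpa [pow_succ])]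
  simp [Finset.sum_range_succ, hpow, pow_succ, hLx₀, hLyx₀]
  module
end

section
/- Let U be a real vector space with a commutative bilinear product and a unit element e (so ex = x for all x ∈ U). Let V be a finite-dimensional complex inner product space with Hermitian inner product h, linear in the first argument, and let R : U → End_ℂ(V) be an ℝ-linear map such that every R_x is self-adjoint with respect to h, R_e = (1/2)·Id, and R_{xy} = R_x R_y + R_y R_x for all x, y ∈ U. Let e₁ ∈ U satisfy e₁e₁ = e₁ and let y ∈ U satisfy e₁y = (1/2)y; set e' := e − e₁ and B := R_y + 2(R_y R_{e₁} − R_{e₁} R_y). Then: (1) B ∘ R_{e'} = 0, and consequently exp(B) v = v for every v in the range of R_{e'}; (2) B* ∘ R_{e₁} = 0, and consequently exp(B*) v = v for every v in the range of R_{e₁}; (3) R_{e₁} ∘ B = 0, and consequently R_{e₁} ∘ exp(B) = R_{e₁}, where B* denotes the Hermitian adjoint and exp the exponential of a linear endomorphism. -/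
/-!
Put `p := R (2 • e₁)` and `b := R y`. The representation identity makes `p` idempotent and puts
`b` in the Peirce `½`-space of `p`, i.e. `p b + b p = b`; multiplying this by `p` on the left
gives `p b p = 0`, and it rewrites `B` as `2 b p` and `B* = 2 p b`. Since `R e' = ½ (1 - p)` and
`R e₁ = ½ p`, the three products vanish, and `exp B` fixes everything that `B` annihilates
because every term of the exponential series after the first contains a factor `B`.
-/

namespace NormedSpace

variable {𝔸 : Type*} [NormedRing 𝔸] [NormedAlgebra ℚ 𝔸] [CompleteSpace 𝔸]

theorem mul_exp_of_mul_eq_zero {a b : 𝔸} (h : b * a = 0) : b * exp a = b := by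
  simpa [SemiconjBy] using (show SemiconjBy b a 0 by simp [SemiconjBy, h]).exp_right

theorem exp_mul_of_mul_eq_zero {a b : 𝔸} (h : a * b = 0) : exp a * b = b := by
  simpa [SemiconjBy, eq_comm] using (show SemiconjBy b 0 a by simp [SemiconjBy, h]).exp_right

end NormedSpace

namespace LinearMap

open NormedSpace

variable {𝕜 E : Type*} [RCLike 𝕜] [NormedAddCommGroup E] [NormedSpace 𝕜 E]
  [FiniteDimensional 𝕜 E]

theorem exp_toContinuousLinearMap_apply_of_mul_eq_zero {f g : Module.End 𝕜 E} (h : f * g = 0)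
    (v : E) : exp (toContinuousLinearMap f) (g v) = g v := by
  let +nondep : NormedAlgebra ℚ (E →L[𝕜] E) := .restrictScalars ℚ 𝕜 _
  have : CompleteSpace E := FiniteDimensional.complete 𝕜 E
  have hfg : toContinuousLinearMap f * toContinuousLinearMap g = 0 :=
    congrArg toContinuousLinearMap h
  exact congrArg (· v) (exp_mul_of_mul_eq_zero hfg)

theorem apply_exp_toContinuousLinearMap_of_mul_eq_zero {f g : Module.End 𝕜 E} (h : g * f = 0)
    (v : E) : g (exp (toContinuousLinearMap f) v) = g v := by
  let +nondep : NormedAlgebra ℚ (E →L[𝕜] E) := .restrictScalars ℚ 𝕜 _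
  have : CompleteSpace E := FiniteDimensional.complete 𝕜 E
  have hgf : toContinuousLinearMap g * toContinuousLinearMap f = 0 :=
    congrArg toContinuousLinearMap h
  exact congrArg (· v) (mul_exp_of_mul_eq_zero hgf)

end LinearMap

namespace IsIdempotentElem

variable {A : Type*} [Ring A] {p b : A}

theorem mul_mul_self_eq_zero_of_mul_add_mul (hp : IsIdempotentElem p) (hb : p * b + b * p = b) :
    p * b * p = 0 := by
  have h := congrArg (p * ·) hb
  simp only [mul_add, ← mul_assoc, hp.eq] at h
  simpa using h

end IsIdempotentElem

theorem add_mul_sub_mul_eq_two_mul_of_mul_add_mul {A : Type*} [Ring A] {p b : A}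
    (hb : p * b + b * p = b) : b + (b * p - p * b) = 2 * (b * p) := by
  nth_rw 1 [← hb]
  noncomm_ring

section JordanRepresentation

variable {U A : Type*} [AddCommGroup U] [Module ℝ U] [Ring A] [Algebra ℝ A]
  {mul : U →ₗ[ℝ] U →ₗ[ℝ] U} {R : U →ₗ[ℝ] A}

theorem isIdempotentElem_two_smul_of_mul_self (hrep : ∀ x y, R (mul x y) = R x * R y + R y * R x)
    {x : U} (hx : mul x x = x) : IsIdempotentElem (R ((2 : ℝ) • x)) := by
  have hsq : R x * R x + R x * R x = R x := by rw [← hrep, hx]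
  calc R ((2 : ℝ) • x) * R ((2 : ℝ) • x) = (2 : ℝ) • (R x * R x + R x * R x) := by
        rw [map_smul, smul_mul_smul]; module
    _ = R ((2 : ℝ) • x) := by rw [hsq, map_smul]

theorem two_smul_mul_add_mul_of_mul_eq_half_smul
    (hrep : ∀ x y, R (mul x y) = R x * R y + R y * R x) {x y : U}
    (hxy : mul x y = (1 / 2 : ℝ) • y) :
    R ((2 : ℝ) • x) * R y + R y * R ((2 : ℝ) • x) = R y := by
  rw [← hrep, LinearMap.map_smul₂, hxy, smul_smul]
  norm_num

end JordanRepresentation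

theorem stmt11_general {U : Type*} [AddCommGroup U] [Module ℝ U]
    {V : Type*} [NormedAddCommGroup V] [InnerProductSpace ℂ V] [FiniteDimensional ℂ V]
    (mul : U →ₗ[ℝ] U →ₗ[ℝ] U)
    (e : U)
    (R : U →ₗ[ℝ] (V →ₗ[ℂ] V))
    (hsymm : ∀ x : U, LinearMap.IsSymmetric (R x))
    (hRe : R e = (1 / 2 : ℝ) • LinearMap.id)
    (hrep : ∀ x y : U, R (mul x y) = R x ∘ₗ R y + R y ∘ₗ R x)
    (e₁ y : U) (he₁ : mul e₁ e₁ = e₁) (hy : mul e₁ y = (1 / 2 : ℝ) • y)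
    (e' : U) (he' : e' = e - e₁)
    (B : V →ₗ[ℂ] V)
    (hB : B = R y + (2 : ℝ) • (R y ∘ₗ R e₁ - R e₁ ∘ₗ R y)) :
    (B ∘ₗ R e' = 0 ∧ ∀ v ∈ LinearMap.range (R e'),
        NormedSpace.exp (LinearMap.toContinuousLinearMap B) v = v) ∧
      (LinearMap.adjoint B ∘ₗ R e₁ = 0 ∧ ∀ v ∈ LinearMap.range (R e₁),
        NormedSpace.exp (LinearMap.toContinuousLinearMap (LinearMap.adjoint B)) v = v) ∧
      (R e₁ ∘ₗ B = 0 ∧ ∀ v : V,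
        R e₁ (NormedSpace.exp (LinearMap.toContinuousLinearMap B) v) = R e₁ v) := by
  let p := R ((2 : ℝ) • e₁)
  have hp : IsIdempotentElem p := isIdempotentElem_two_smul_of_mul_self hrep he₁
  have hpy : p * R y + R y * p = R y := two_smul_mul_add_mul_of_mul_eq_half_smul hrep hy
  have hpyp : p * R y * p = 0 := hp.mul_mul_self_eq_zero_of_mul_add_mul hpy
  have hRe₁ : R e₁ = (1 / 2 : ℝ) • p := by
    simp only [p, map_smul, smul_smul]
    norm_num
  have hRe' : R e' = (1 / 2 : ℝ) • (1 - p) := by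
    rw [he', map_sub, hRe, hRe₁, smul_sub, Module.End.one_eq_id]
  have hB' : B = 2 * (R y * p) := by
    rw [← add_mul_sub_mul_eq_two_mul_of_mul_add_mul hpy, hB, hRe₁]
    simp only [← Module.End.mul_eq_comp, mul_smul_comm, smul_mul_assoc, ← smul_sub, smul_smul]
    norm_num
  have hB_adjoint : LinearMap.adjoint B = 2 * (p * R y) := by
    have hsa (x : U) : IsSelfAdjoint (R x) :=
      (LinearMap.isSymmetric_iff_isSelfAdjoint _).mp (hsymm x)
    rw [← LinearMap.star_eq_adjoint, hB', star_mul, star_mul, (hsa y).star_eq, (hsa _).star_eq,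
      star_ofNat, mul_two, two_mul]
  have hBRe' : B * R e' = 0 := by
    rw [hB', hRe', mul_smul_comm, mul_assoc, mul_assoc, hp.mul_one_sub_self, mul_zero, mul_zero,
      smul_zero]
  have hB_adjointRe₁ : LinearMap.adjoint B * R e₁ = 0 := by
    rw [hB_adjoint, hRe₁, mul_smul_comm, mul_assoc, hpyp, mul_zero, smul_zero]
  have hRe₁B : R e₁ * B = 0 := by
    rw [hB', hRe₁, smul_mul_assoc, two_mul, mul_add, ← mul_assoc, hpyp, add_zero, smul_zero]
  refine ⟨⟨hBRe', ?_⟩, ⟨hB_adjointRe₁, ?_⟩, hRe₁B,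
    LinearMap.apply_exp_toContinuousLinearMap_of_mul_eq_zero hRe₁B⟩
  · rintro _ ⟨w, rfl⟩
    exact LinearMap.exp_toContinuousLinearMap_apply_of_mul_eq_zero hBRe' w
  · rintro _ ⟨w, rfl⟩
    exact LinearMap.exp_toContinuousLinearMap_apply_of_mul_eq_zero hB_adjointRe₁ w

/-- Lemma 5.2 of the paper: `U` a real vector space with a commutative
bilinear product and unit `e`, `V` a finite-dimensional complex inner product space (with
Hermitian product linear in the first argument), `R : U → End_ℂ(V)` ℝ-linear with every `R x`
self-adjoint, `R e = (1/2)·Id` and `R (xy) = R x R y + R y R x`. For an idempotent `e₁` and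
`y` with `e₁ y = (1/2) y`, set `e' := e - e₁` and `B := R y + 2(R y R e₁ - R e₁ R y)`. Then
`B ∘ R e' = 0` (so `exp B` is the identity on the range of `R e'`), `B* ∘ R e₁ = 0` (so
`exp B*` is the identity on the range of `R e₁`), and `R e₁ ∘ B = 0` (so
`R e₁ ∘ exp B = R e₁`). -/
theorem stmt11 {U : Type*} [AddCommGroup U] [Module ℝ U]
    {V : Type*} [NormedAddCommGroup V] [InnerProductSpace ℂ V] [FiniteDimensional ℂ V]
    (mul : U →ₗ[ℝ] U →ₗ[ℝ] U) (hcomm : ∀ a b : U, mul a b = mul b a)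
    (e : U) (hunit : ∀ x : U, mul e x = x)
    (R : U →ₗ[ℝ] (V →ₗ[ℂ] V))
    (hsymm : ∀ x : U, LinearMap.IsSymmetric (R x))
    (hRe : R e = (1 / 2 : ℝ) • LinearMap.id)
    (hrep : ∀ x y : U, R (mul x y) = R x ∘ₗ R y + R y ∘ₗ R x)
    (e₁ y : U) (he₁ : mul e₁ e₁ = e₁) (hy : mul e₁ y = (1 / 2 : ℝ) • y)
    (e' : U) (he' : e' = e - e₁)
    (B : V →ₗ[ℂ] V)
    (hB : B = R y + (2 : ℝ) • (R y ∘ₗ R e₁ - R e₁ ∘ₗ R y)) :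
    (B ∘ₗ R e' = 0 ∧ ∀ v ∈ LinearMap.range (R e'),
        NormedSpace.exp (LinearMap.toContinuousLinearMap B) v = v) ∧
      (LinearMap.adjoint B ∘ₗ R e₁ = 0 ∧ ∀ v ∈ LinearMap.range (R e₁),
        NormedSpace.exp (LinearMap.toContinuousLinearMap (LinearMap.adjoint B)) v = v) ∧
      (R e₁ ∘ₗ B = 0 ∧ ∀ v : V,
        R e₁ (NormedSpace.exp (LinearMap.toContinuousLinearMap B) v) = R e₁ v) :=
  stmt11_general mul e R hsymm hRe hrep e₁ y he₁ hy e' he' B hB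
end

section
/- Let U be a finite-dimensional real inner product space equipped with a commutative bilinear product (x,y) ↦ xy that is associative with respect to the inner product, i.e. ⟨xy, z⟩ = ⟨y, xz⟩ for all x, y, z ∈ U; write T_x for left multiplication by x. Let V be a finite-dimensional complex inner product space and R : U → End_ℂ(V) a map such that every R_x is self-adjoint; write tr_ℝ R_x for the trace of R_x regarded as an ℝ-linear endomorphism of V. Let e' ∈ U be the unique element such that ⟨e', x⟩ = 2(tr T_x + tr_ℝ R_x) for every x ∈ U. Suppose A : U → U is a linear map, with adjoint ᵗA relative to ⟨·,·⟩, satisfying tr T_{(Ax)y} = tr T_{x(ᵗAy)} and tr_ℝ R_{(Ax)y} = tr_ℝ R_{x(ᵗAy)} for all x, y ∈ U. Then A ∘ T_{e'} = T_{e'} ∘ A. -/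
open LinearMap

section InvariantProduct

variable {U : Type*} [NormedAddCommGroup U] [InnerProductSpace ℝ U]
  (mul : U →ₗ[ℝ] U →ₗ[ℝ] U)

theorem inner_mul_eq_inner_mul_of_comm_of_assoc (hcomm : ∀ a b : U, mul a b = mul b a)
    (hassoc : ∀ x y z : U, inner ℝ (mul x y) z = inner ℝ y (mul x z)) (e w z : U) :
    inner ℝ (mul e w) z = inner ℝ e (mul w z) := by
  rw [hcomm e w, hassoc]

theorem comp_mul_eq_mul_comp_of_inner_mul_adjoint [FiniteDimensional ℝ U]
    (hcomm : ∀ a b : U, mul a b = mul b a)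
    (hassoc : ∀ x y z : U, inner ℝ (mul x y) z = inner ℝ y (mul x z))
    {e : U} {A : U →ₗ[ℝ] U}
    (h : ∀ x y : U, inner ℝ e (mul (A x) y) = inner ℝ e (mul x (adjoint A y))) :
    A ∘ₗ mul e = mul e ∘ₗ A := by
  ext x
  refine ext_inner_right ℝ fun y => ?_
  calc inner ℝ (A (mul e x)) y = inner ℝ (mul e x) (adjoint A y) :=
        (adjoint_inner_right A _ _).symm
    _ = inner ℝ e (mul x (adjoint A y)) :=
        inner_mul_eq_inner_mul_of_comm_of_assoc mul hcomm hassoc e x _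
    _ = inner ℝ e (mul (A x) y) := (h x y).symm
    _ = inner ℝ (mul e (A x)) y :=
        (inner_mul_eq_inner_mul_of_comm_of_assoc mul hcomm hassoc e (A x) y).symm

end InvariantProduct

theorem stmt12_general {U : Type*} [NormedAddCommGroup U] [InnerProductSpace ℝ U]
    [FiniteDimensional ℝ U]
    {V : Type*} [NormedAddCommGroup V] [InnerProductSpace ℂ V]
    (mul : U →ₗ[ℝ] U →ₗ[ℝ] U) (hcomm : ∀ a b : U, mul a b = mul b a)
    (hassoc : ∀ x y z : U, (inner ℝ (mul x y) z : ℝ) = inner ℝ y (mul x z))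
    (R : U → (V →ₗ[ℂ] V))
    (e' : U)
    (he' : ∀ x : U, (inner ℝ e' x : ℝ) =
      2 * (LinearMap.trace ℝ U (mul x) + LinearMap.trace ℝ V ((R x).restrictScalars ℝ)))
    (A : U →ₗ[ℝ] U)
    (hT : ∀ x y : U, LinearMap.trace ℝ U (mul (mul (A x) y)) =
      LinearMap.trace ℝ U (mul (mul x (LinearMap.adjoint A y))))
    (hR : ∀ x y : U, LinearMap.trace ℝ V ((R (mul (A x) y)).restrictScalars ℝ) =
      LinearMap.trace ℝ V ((R (mul x (LinearMap.adjoint A y))).restrictScalars ℝ)) :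
    A ∘ₗ mul e' = mul e' ∘ₗ A :=
  comp_mul_eq_mul_comp_of_inner_mul_adjoint mul hcomm hassoc fun x y => by
    rw [he', he', hT, hR]

/-- Proposition 6.4 of the paper: `U` a finite-dimensional real inner product
space with a commutative bilinear product satisfying `⟨xy, z⟩ = ⟨y, xz⟩` (`T_x` denoting left
multiplication), `V` a finite-dimensional complex inner product space, `R : U → End_ℂ(V)` with
each `R x` self-adjoint, `tr_ℝ (R x)` the real trace. Let `e'` satisfy
`⟨e', x⟩ = 2 (tr T_x + tr_ℝ R_x)` for all `x`, and let `A : U → U` be linear with real adjoint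
`ᵗA` such that `tr T_{(Ax)y} = tr T_{x(ᵗAy)}` and `tr_ℝ R_{(Ax)y} = tr_ℝ R_{x(ᵗAy)}` for all
`x, y`. Then `A ∘ T_{e'} = T_{e'} ∘ A`. -/
theorem stmt12 {U : Type*} [NormedAddCommGroup U] [InnerProductSpace ℝ U]
    [FiniteDimensional ℝ U]
    {V : Type*} [NormedAddCommGroup V] [InnerProductSpace ℂ V] [FiniteDimensional ℂ V]
    (mul : U →ₗ[ℝ] U →ₗ[ℝ] U) (hcomm : ∀ a b : U, mul a b = mul b a)
    (hassoc : ∀ x y z : U, (inner ℝ (mul x y) z : ℝ) = inner ℝ y (mul x z))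
    (R : U → (V →ₗ[ℂ] V)) (hsymm : ∀ x : U, LinearMap.IsSymmetric (R x))
    (e' : U)
    (he' : ∀ x : U, (inner ℝ e' x : ℝ) =
      2 * (LinearMap.trace ℝ U (mul x) + LinearMap.trace ℝ V ((R x).restrictScalars ℝ)))
    (A : U →ₗ[ℝ] U)
    (hT : ∀ x y : U, LinearMap.trace ℝ U (mul (mul (A x) y)) =
      LinearMap.trace ℝ U (mul (mul x (LinearMap.adjoint A y))))
    (hR : ∀ x y : U, LinearMap.trace ℝ V ((R (mul (A x) y)).restrictScalars ℝ) =
      LinearMap.trace ℝ V ((R (mul x (LinearMap.adjoint A y))).restrictScalars ℝ)) :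
    A ∘ₗ mul e' = mul e' ∘ₗ A :=
  stmt12_general mul hcomm hassoc R e' he' A hT hR
end

section
/- Let U be a real inner product space and ν ∈ U. Let V be a finite-dimensional complex inner product space with Hermitian inner product h, linear in the first argument; let j denote multiplication by i. Let A be a self-adjoint ℂ-linear endomorphism of V, let P ⊆ V be a complex subspace on which A is positive semidefinite (h(Aq, q) ≥ 0 for all q ∈ P), and let S₀ ⊆ V be a real subspace with S₀ ∩ jS₀ = {0}; for s = σ₁ + jσ₂ with σ₁, σ₂ ∈ S₀ write s̄ := σ₁ − jσ₂. Let H : (S₀ ⊕ jS₀) × (S₀ ⊕ jS₀) → ℂ be a kernel of positive type, i.e. for every n, all a₁,…,aₙ ∈ ℂ and all s₁,…,sₙ ∈ S₀ ⊕ jS₀, the sum Σ_{k,l} a_k · conj(a_l) · H(s_l, s_k) is a nonnegative real number. Define, for points p = (z₁, z₂, q, s) and p' = (z₁', z₂', q', s') in U × U × P × (S₀ ⊕ jS₀), H̃(p, p') := exp( i⟨ν, z₁ − z₁'⟩ − ⟨ν, z₂ + z₂'⟩ + 4 h(Aq, q') + 2 h(As, s̄) + 2 h(A s̄', s') ) ·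 H(s, s'). Then H̃ is a kernel of positive type: for every n, all a₁,…,aₙ ∈ ℂ and all points p₁,…,pₙ, the sum Σ_{k,l} a_k · conj(a_l) · H̃(p_l, p_k) is a nonnegative real number. -/
open ComplexOrder

variable {V : Type*} [NormedAddCommGroup V] [InnerProductSpace ℂ V] [FiniteDimensional ℂ V]

/-!
With `c(p) := i⟨ν, z₁⟩ - ⟨ν, z₂⟩ + 2 h(As, s̄)`, the symmetry of `A` factors the kernel as
`H̃(p, p') = e^{c(p)} · conj (e^{c(p')}) · exp (4 h(Aq, q')) · H(s, s')`.
The first factor is a rank-one positive kernel; the second is the entrywise exponential of the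
Gram matrix of the form `h(A·, ·)` on `P`, which is positive because every term of the
exponential series is a Hadamard power of a positive semidefinite matrix (Schur product theorem);
the last factor is `H`. A Hadamard product of positive semidefinite matrices is again positive
semidefinite.
-/

open Matrix

namespace Matrix

variable {n : Type*} [Fintype n]

lemma star_dotProduct_mulVec_eq_sum (N : Matrix n n ℂ) (a : n → ℂ) :
    star a ⬝ᵥ (N *ᵥ a) = ∑ k, ∑ l, a k * starRingEnd ℂ (a l) * N l k := by
  simp only [dotProduct, mulVec, Finset.mul_sum, Pi.star_apply, RCLike.star_def]
  rw [Finset.sum_comm]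
  exact Finset.sum_congr rfl fun _ _ => Finset.sum_congr rfl fun _ _ => by ring

lemma posSemidef_of_forall_dotProduct_mulVec_nonneg {N : Matrix n n ℂ}
    (h : ∀ x, 0 ≤ star x ⬝ᵥ (N *ᵥ x)) : N.PosSemidef := by
  classical
  refine .of_dotProduct_mulVec_nonneg ?_ h
  rw [← isSymmetric_toEuclideanLin_iff, LinearMap.isSymmetric_iff_inner_map_self_real]
  intro v
  have hreal : starRingEnd ℂ (star v.ofLp ⬝ᵥ (N *ᵥ v.ofLp)) = star v.ofLp ⬝ᵥ (N *ᵥ v.ofLp) :=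
    Complex.conj_eq_iff_im.mpr (Complex.nonneg_iff.mp (h v)).2.symm
  have hswap : v.ofLp ⬝ᵥ star (N *ᵥ v.ofLp) = starRingEnd ℂ (star v.ofLp ⬝ᵥ (N *ᵥ v.ofLp)) := by
    rw [← RCLike.star_def, star_dotProduct, star_star, dotProduct_comm]
  simp only [EuclideanSpace.inner_eq_star_dotProduct, ofLp_toLpLin, toLin'_apply, hswap, hreal]

lemma PosSemidef.map_pow {M : Matrix n n ℂ} (hM : M.PosSemidef) (p : ℕ) :
    (M.map (· ^ p)).PosSemidef := by
  induction p with
  | zero => convert posSemidef_vecMulVec_self_star (1 : n → ℂ) using 1; ext; simp [vecMulVec]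
  | succ p ih =>
    have : M.map (· ^ (p + 1)) = M.map (· ^ p) ⊙ M := by ext; simp [pow_succ]
    rw [this]
    exact ih.hadamard hM

lemma PosSemidef.map_exp {M : Matrix n n ℂ} (hM : M.PosSemidef) :
    (M.map Complex.exp).PosSemidef := by
  have hseries : HasSum (fun p : ℕ => (p.factorial : ℂ)⁻¹ • M.map (· ^ p)) (M.map Complex.exp) := by
    refine Pi.hasSum.mpr fun i => Pi.hasSum.mpr fun j => ?_
    simpa [Complex.exp_eq_exp_ℂ] using NormedSpace.exp_series_hasSum_exp' (𝕂 := ℂ) (M i j)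
  refine .of_dotProduct_mulVec_nonneg ?_ fun x => ?_
  · ext i j
    simp [← Complex.exp_conj, ← hM.1.apply i j]
  · let Q : Matrix n n ℂ →+ ℂ :=
      AddMonoidHom.mk' (fun N => star x ⬝ᵥ (N *ᵥ x)) fun _ _ => by simp [add_mulVec, dotProduct_add]
    refine (hseries.map Q ?_).nonneg fun p => ?_
    · exact continuous_const.dotProduct (continuous_id.matrix_mulVec continuous_const)
    · exact ((hM.map_pow p).smul (by positivity)).dotProduct_mulVec_nonneg x

lemma posSemidef_of_inner_map_self_nonneg {E : Type*} [NormedAddCommGroup E]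
    [InnerProductSpace ℂ E] {A : E →ₗ[ℂ] E} {P : Submodule ℂ E}
    (hP : ∀ q ∈ P, 0 ≤ inner ℂ q (A q)) {q : n → E} (hq : ∀ k, q k ∈ P) :
    (of fun l k => inner ℂ (q k) (A (q l))).PosSemidef := by
  refine posSemidef_of_forall_dotProduct_mulVec_nonneg fun x => ?_
  set y := ∑ k, starRingEnd ℂ (x k) • q k
  have hy : star x ⬝ᵥ (of (fun l k => inner ℂ (q k) (A (q l))) *ᵥ x) = inner ℂ y (A y) := by
    simp [y, dotProduct, mulVec, Finset.mul_sum]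
  rw [hy]
  exact hP y (P.sum_mem fun k _ => P.smul_mem _ (hq k))

end Matrix

theorem stmt13_general {U : Type*} [NormedAddCommGroup U] [InnerProductSpace ℝ U] (ν : U)
    (A : V →ₗ[ℂ] V) (hA : LinearMap.IsSymmetric A)
    (P : Submodule ℂ V) (hP : ∀ q ∈ P, 0 ≤ (inner ℂ q (A q) : ℂ))
    (S₀ : Submodule ℝ V)
    (H : V → V → ℂ)
    (hH : ∀ (n : ℕ) (a : Fin n → ℂ) (σ₁ σ₂ : Fin n → V),
      (∀ k, σ₁ k ∈ S₀) → (∀ k, σ₂ k ∈ S₀) →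
      0 ≤ ∑ k, ∑ l, a k * (starRingEnd ℂ) (a l) *
        H (σ₁ l + Complex.I • σ₂ l) (σ₁ k + Complex.I • σ₂ k)) :
    ∀ (n : ℕ) (a : Fin n → ℂ) (z₁ z₂ : Fin n → U) (q σ₁ σ₂ : Fin n → V),
      (∀ k, q k ∈ P) → (∀ k, σ₁ k ∈ S₀) → (∀ k, σ₂ k ∈ S₀) →
      0 ≤ ∑ k, ∑ l, a k * (starRingEnd ℂ) (a l) *
        (Complex.exp (Complex.I * ((inner ℝ ν (z₁ l - z₁ k) : ℝ) : ℂ)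
            - ((inner ℝ ν (z₂ l + z₂ k) : ℝ) : ℂ)
            + 4 * (inner ℂ (q k) (A (q l)) : ℂ)
            + 2 * (inner ℂ (σ₁ l - Complex.I • σ₂ l) (A (σ₁ l + Complex.I • σ₂ l)) : ℂ)
            + 2 * (inner ℂ (σ₁ k + Complex.I • σ₂ k) (A (σ₁ k - Complex.I • σ₂ k)) : ℂ)) *
          H (σ₁ l + Complex.I • σ₂ l) (σ₁ k + Complex.I • σ₂ k)) := by
  intro n a z₁ z₂ q σ₁ σ₂ hq h₁ h₂
  set s : Fin n → V := fun m => σ₁ m + Complex.I • σ₂ m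
  set c : Fin n → ℂ := fun m => Complex.I * ((inner ℝ ν (z₁ m) : ℝ) : ℂ)
    - ((inner ℝ ν (z₂ m) : ℝ) : ℂ) + 2 * inner ℂ (σ₁ m - Complex.I • σ₂ m) (A (s m))
  have hK : (of fun l k => H (s l) (s k)).PosSemidef :=
    posSemidef_of_forall_dotProduct_mulVec_nonneg fun x => by
      rw [star_dotProduct_mulVec_eq_sum]
      exact hH n x σ₁ σ₂ h₁ h₂
  have hM : (of fun l k => 4 * inner ℂ (q k) (A (q l))).PosSemidef := by
    have h4 := (posSemidef_of_inner_map_self_nonneg hP hq).smul (show (0 : ℂ) ≤ 4 by norm_num)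
    rwa [smul_of] at h4
  have hN := ((posSemidef_vecMulVec_self_star fun m => Complex.exp (c m)).hadamard
    hM.map_exp).hadamard hK
  convert hN.dotProduct_mulVec_nonneg a using 1
  rw [star_dotProduct_mulVec_eq_sum]
  refine Finset.sum_congr rfl fun k _ => Finset.sum_congr rfl fun l _ => ?_
  have hsym : starRingEnd ℂ (inner ℂ (σ₁ k - Complex.I • σ₂ k) (A (s k)))
      = inner ℂ (s k) (A (σ₁ k - Complex.I • σ₂ k)) := by
    rw [inner_conj_symm, hA]
  simp only [hadamard_apply, vecMulVec_apply, map_apply, of_apply, Pi.star_apply,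
    RCLike.star_def, ← Complex.exp_conj, ← Complex.exp_add, c, map_add, map_sub, map_mul,
    Complex.conj_I, Complex.conj_ofReal, map_ofNat, hsym]
  congr 3
  simp only [s, map_add, inner_sub_right, inner_add_right, Complex.ofReal_sub, Complex.ofReal_add]
  ring

/-- Proposition 4.10 of the paper, operator form. With the Hermitian inner
product `h` linear in the first argument (`h v w = inner w v` in Mathlib's convention),
`A` self-adjoint and positive semidefinite on the complex subspace `P`, and `S₀` a real
subspace with `S₀ ∩ jS₀ = {0}`, every element of `S₀ ⊕ jS₀` is written `s = σ₁ + i σ₂` with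
`σ₁, σ₂ ∈ S₀`, and `s̄ := σ₁ - i σ₂`. If `H` is of positive type on `S₀ ⊕ jS₀`, then
`H̃(p, p') := exp(i⟨ν, z₁ - z₁'⟩ - ⟨ν, z₂ + z₂'⟩ + 4 h(Aq, q') + 2 h(As, s̄) + 2 h(As̄', s'))
· H(s, s')` is of positive type on `U × U × P × (S₀ ⊕ jS₀)`; nonnegativity of the complex
sums is expressed via the complex order. -/
theorem stmt13 {U : Type*} [NormedAddCommGroup U] [InnerProductSpace ℝ U] (ν : U)
    (A : V →ₗ[ℂ] V) (hA : LinearMap.IsSymmetric A)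
    (P : Submodule ℂ V) (hP : ∀ q ∈ P, 0 ≤ (inner ℂ q (A q) : ℂ))
    (S₀ : Submodule ℝ V) (hS₀ : S₀ ⊓ S₀.map smulI = ⊥)
    (H : V → V → ℂ)
    (hH : ∀ (n : ℕ) (a : Fin n → ℂ) (σ₁ σ₂ : Fin n → V),
      (∀ k, σ₁ k ∈ S₀) → (∀ k, σ₂ k ∈ S₀) →
      0 ≤ ∑ k, ∑ l, a k * (starRingEnd ℂ) (a l) *
        H (σ₁ l + Complex.I • σ₂ l) (σ₁ k + Complex.I • σ₂ k)) :
    ∀ (n : ℕ) (a : Fin n → ℂ) (z₁ z₂ : Fin n → U) (q σ₁ σ₂ : Fin n → V),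
      (∀ k, q k ∈ P) → (∀ k, σ₁ k ∈ S₀) → (∀ k, σ₂ k ∈ S₀) →
      0 ≤ ∑ k, ∑ l, a k * (starRingEnd ℂ) (a l) *
        (Complex.exp (Complex.I * ((inner ℝ ν (z₁ l - z₁ k) : ℝ) : ℂ)
            - ((inner ℝ ν (z₂ l + z₂ k) : ℝ) : ℂ)
            + 4 * (inner ℂ (q k) (A (q l)) : ℂ)
            + 2 * (inner ℂ (σ₁ l - Complex.I • σ₂ l) (A (σ₁ l + Complex.I • σ₂ l)) : ℂ)
            + 2 * (inner ℂ (σ₁ k + Complex.I • σ₂ k) (A (σ₁ k - Complex.I • σ₂ k)) : ℂ)) *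
          H (σ₁ l + Complex.I • σ₂ l) (σ₁ k + Complex.I • σ₂ k)) :=
  stmt13_general ν A hA P hP S₀ H hH
end
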